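/- (Lemma 2: simplification of the re-order level computation.) Define v_{T+1} = 0 and v_n = min_{1 ≤ a ≤ T−n+1} { ℓ_{n,a} + v_{n+a} }, and let a_n be a cycle length attaining this minimum. For each a with 1 ≤ a ≤ T−n+1 for which the set { y : L_{n,a}(y) + v_{n+a} ≤ v_n } is nonempty and bounded below, put ŝ_{n,a} = inf { y : L_{n,a}(y) + v_{n+a} ≤ v_n } (the set for a = a_n is always nonempty since L_{n,a_n}(y_{n,a_n}) + v_{n+a_n} = v_n − K ≤ v_n). Then min over all admissible a of ŝ_{n,a} equals min over admissible a with 1 ≤ a ≤ a_n of ŝ_{n,a}; equivalently, for every a ≥ a_n for which ŝ_{n,a} exists, ŝ_{n,a_n} ≤ ŝ_{n,a}. -/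

import Mathlib

/-!
Write `S_a = {z | L_{n,a}(z) + v_{n+a} ≤ v_n}`. The point `y_{n,a_n}` lies in `S_{a_n}`, since
`L_{n,a_n}(y_{n,a_n}) + v_{n+a_n} = v_n - K`. For `a ≥ a_n`, the difference `L_{n,a} - L_{n,a_n}`
is a sum of newsvendor costs of the accumulated demands `ξ_{n,k}`, `a_n < k ≤ a`. By minimality of
`y_{n,a_n}` and since the cdfs `φ_{n,k}` decrease in `k`, `P(ξ_{n,k} < y_{n,a_n}) ≤ p/(h+p)`
for these `k`, so each of these costs is nonincreasing on `(-∞, y_{n,a_n}]`.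
Optimality of `v_n` and of `y_{n,a}` gives
`v_{n+a_n} ≤ (L_{n,a} - L_{n,a_n})(y_{n,a_n}) + v_{n+a}`; hence every `z < y_{n,a_n}` in `S_a`
also lies in `S_{a_n}`, and `inf S_{a_n} ≤ inf S_a`.
-/

open MeasureTheory ProbabilityTheory

/-- Accumulated demand `ξ_{n,k} = ξ_n + ⋯ + ξ_{n+k-1}`. -/
noncomputable def acc {Ω : Type*} (ξ : ℕ → Ω → ℝ) (n k : ℕ) (ω : Ω) : ℝ :=
  ∑ i ∈ Finset.range k, ξ (n + i) ω

/-- Cumulative distribution function `φ_{n,k}(y) = P(ξ_{n,k} ≤ y)` of accumulated demand. -/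
noncomputable def cdf {Ω : Type*} [MeasurableSpace Ω] (μ : Measure Ω) (ξ : ℕ → Ω → ℝ)
    (n k : ℕ) (y : ℝ) : ℝ :=
  (μ {ω | acc ξ n k ω ≤ y}).toReal

/-- Multi-period cost function
`L_{n,a}(y) = Σ_{k=1}^{a} (h·E[(y − ξ_{n,k})⁺] + p·E[(ξ_{n,k} − y)⁺])`. -/
noncomputable def Lmp {Ω : Type*} [MeasurableSpace Ω] (μ : Measure Ω) (h p : ℝ)
    (ξ : ℕ → Ω → ℝ) (n a : ℕ) (y : ℝ) : ℝ :=
  ∑ k ∈ Finset.Icc 1 a,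
    (h * ∫ ω, max (y - acc ξ n k ω) 0 ∂μ + p * ∫ ω, max (acc ξ n k ω - y) 0 ∂μ)

open Filter Set Topology

section Newsvendor

def newsvendorLoss (h p w x : ℝ) : ℝ := h * max (w - x) 0 + p * max (x - w) 0

variable {Ω : Type*} [MeasurableSpace Ω] {μ : Measure Ω}

noncomputable def newsvendorCost (μ : Measure Ω) (h p : ℝ) (f : Ω → ℝ) (w : ℝ) : ℝ :=
  h * ∫ ω, max (w - f ω) 0 ∂μ + p * ∫ ω, max (f ω - w) 0 ∂μ

lemma integrable_newsvendorLoss [IsFiniteMeasure μ] {f : Ω → ℝ} (hf : Integrable f μ)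
    (h p w : ℝ) :
    Integrable (fun ω => newsvendorLoss h p w (f ω)) μ :=
  (((integrable_const w).sub hf).pos_part.const_mul h).add
    ((hf.sub (integrable_const w)).pos_part.const_mul p)

lemma newsvendorCost_eq_integral [IsFiniteMeasure μ] {f : Ω → ℝ} (hf : Integrable f μ)
    (h p w : ℝ) :
    newsvendorCost μ h p f w = ∫ ω, newsvendorLoss h p w (f ω) ∂μ := by
  have hl : Integrable (fun ω => h * max (w - f ω) 0) μ :=
    ((integrable_const w).sub hf).pos_part.const_mul h
  have hr : Integrable (fun ω => p * max (f ω - w) 0) μ :=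
    (hf.sub (integrable_const w)).pos_part.const_mul p
  rw [newsvendorCost, ← integral_const_mul, ← integral_const_mul, ← integral_add hl hr]
  rfl

lemma newsvendorLoss_le {h p z w : ℝ} (hh : 0 ≤ h) (hp : 0 ≤ p) (hzw : z ≤ w) (x : ℝ) :
    newsvendorLoss h p w x ≤
      newsvendorLoss h p z x + (Iio w).indicator (fun _ => (h + p) * (w - z)) x - p * (w - z) := by
  unfold newsvendorLoss
  by_cases hxw : x < w
  · rw [indicator_of_mem (mem_Iio.2 hxw), max_eq_right (a := x - w) (by linarith)]
    rcases le_total x z with hxz | hzx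
    · rw [max_eq_left (a := w - x) (by linarith), max_eq_left (a := z - x) (by linarith),
        max_eq_right (a := x - z) (by linarith)]
      linarith
    · rw [max_eq_left (a := w - x) (by linarith), max_eq_right (a := z - x) (by linarith),
        max_eq_left (a := x - z) (by linarith)]
      nlinarith
  · rw [indicator_of_notMem (notMem_Iio.2 (not_lt.1 hxw)), max_eq_right (a := w - x) (by linarith),
      max_eq_right (a := z - x) (by linarith), max_eq_left (a := x - w) (by linarith),
      max_eq_left (a := x - z) (by linarith)]
    linarith

lemma newsvendorCost_le_of_le [IsProbabilityMeasure μ] {f : Ω → ℝ} (hf : Integrable f μ)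
    {h p z w : ℝ} (hh : 0 ≤ h) (hp : 0 ≤ p) (hzw : z ≤ w)
    (hw : (h + p) * μ.real {ω | f ω < w} ≤ p) :
    newsvendorCost μ h p f w ≤ newsvendorCost μ h p f z := by
  set A := {ω | f ω < w}
  have hA : NullMeasurableSet A μ := nullMeasurableSet_lt hf.1.aemeasurable aemeasurable_const
  have hind : Integrable (A.indicator fun _ => (h + p) * (w - z)) μ :=
    (integrable_const _).indicator₀ hA
  have hIz : Integrable (fun ω => newsvendorLoss h p z (f ω) +
      A.indicator (fun _ => (h + p) * (w - z)) ω) μ :=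
    (integrable_newsvendorLoss hf h p z).add hind
  calc newsvendorCost μ h p f w
      ≤ ∫ ω, (newsvendorLoss h p z (f ω) + A.indicator (fun _ => (h + p) * (w - z)) ω
          - p * (w - z)) ∂μ := by
        rw [newsvendorCost_eq_integral hf]
        exact integral_mono (integrable_newsvendorLoss hf h p w) (hIz.sub (integrable_const _))
          fun ω => newsvendorLoss_le hh hp hzw (f ω)
    _ = newsvendorCost μ h p f z + (w - z) * ((h + p) * μ.real A - p) := by
        rw [integral_sub hIz (integrable_const _),
          integral_add (integrable_newsvendorLoss hf h p z) hind, integral_indicator₀ hA,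
          setIntegral_const, integral_const, probReal_univ, newsvendorCost_eq_integral hf,
          smul_eq_mul, smul_eq_mul]
        ring
    _ ≤ newsvendorCost μ h p f z :=
        add_le_of_nonpos_right (mul_nonpos_of_nonneg_of_nonpos (sub_nonneg.2 hzw) (by linarith))

end Newsvendor

lemma measureReal_lt_le_of_forall_lt {Ω : Type*} [MeasurableSpace Ω] {μ : Measure Ω}
    [IsFiniteMeasure μ] {X : Ω → ℝ} {y c : ℝ} (hc : ∀ t < y, μ.real {ω | X ω ≤ t} ≤ c) :
    μ.real {ω | X ω < y} ≤ c := by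
  obtain ⟨u, hu_mono, hu_lt, hu_lim⟩ := exists_seq_strictMono_tendsto y
  have hunion : ⋃ m, {ω | X ω ≤ u m} = {ω | X ω < y} := preimage_iUnion.symm.trans
    (congrArg (X ⁻¹' ·) (iUnion_Iic_eq_Iio_of_lt_of_tendsto hu_lt hu_lim))
  have hlim : Tendsto (fun m => μ.real {ω | X ω ≤ u m}) atTop (𝓝 (μ.real {ω | X ω < y})) := by
    rw [← hunion]
    refine (ENNReal.tendsto_toReal (measure_ne_top _ _)).comp
      (tendsto_measure_iUnion_atTop fun i j hij ω (hω : X ω ≤ u i) => ?_)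
    exact hω.trans (hu_mono.monotone hij)
  exact le_of_tendsto' hlim fun m => hc _ (hu_lt m)

section AccumulatedDemand

variable {Ω : Type*} [MeasurableSpace Ω] {μ : Measure Ω} {ξ : ℕ → Ω → ℝ}

lemma integrable_acc (hint : ∀ i, Integrable (ξ i) μ) (n k : ℕ) : Integrable (acc ξ n k) μ :=
  integrable_finsetSum _ fun i _ => hint (n + i)

lemma acc_le_acc_ae (hpos : ∀ i, ∀ᵐ ω ∂μ, 0 ≤ ξ i ω) (n : ℕ) {j k : ℕ} (hjk : j ≤ k) :
    ∀ᵐ ω ∂μ, acc ξ n j ω ≤ acc ξ n k ω := by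
  filter_upwards [ae_all_iff.2 hpos] with ω hω
  exact Finset.sum_le_sum_of_subset_of_nonneg (Finset.range_subset_range.2 hjk)
    fun i _ _ => hω (n + i)

lemma cdf_le_cdf_of_le [IsFiniteMeasure μ] (hpos : ∀ i, ∀ᵐ ω ∂μ, 0 ≤ ξ i ω) (n : ℕ)
    {j k : ℕ} (hjk : j ≤ k) (t : ℝ) : cdf μ ξ n k t ≤ cdf μ ξ n j t := by
  refine ENNReal.toReal_mono (measure_ne_top _ _) (measure_mono_ae ?_)
  filter_upwards [acc_le_acc_ae hpos n hjk] with ω hω hk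
  exact hω.trans hk

lemma cdf_lt_of_lt_of_isLeast [IsFiniteMeasure μ] (hpos : ∀ i, ∀ᵐ ω ∂μ, 0 ≤ ξ i ω)
    {n an k : ℕ} (hk : an ≤ k) {ρ ys t : ℝ}
    (hys : IsLeast {z : ℝ | an * ρ ≤ ∑ j ∈ Finset.Icc 1 an, cdf μ ξ n j z} ys) (ht : t < ys) :
    cdf μ ξ n k t < ρ := by
  by_contra! hρ
  have hle : ∀ j ∈ Finset.Icc 1 an, ρ ≤ cdf μ ξ n j t := fun j hj =>
    hρ.trans (cdf_le_cdf_of_le hpos n ((Finset.mem_Icc.1 hj).2.trans hk) t)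
  have hsum := Finset.card_nsmul_le_sum _ _ _ hle
  rw [Nat.card_Icc, Nat.add_sub_cancel, nsmul_eq_mul] at hsum
  exact (hys.2 hsum).not_gt ht

lemma measureReal_acc_lt_le_of_isLeast [IsFiniteMeasure μ] (hpos : ∀ i, ∀ᵐ ω ∂μ, 0 ≤ ξ i ω)
    {n an k : ℕ} (hk : an ≤ k) {ρ ys : ℝ}
    (hys : IsLeast {z : ℝ | an * ρ ≤ ∑ j ∈ Finset.Icc 1 an, cdf μ ξ n j z} ys) :
    μ.real {ω | acc ξ n k ω < ys} ≤ ρ :=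
  measureReal_lt_le_of_forall_lt fun _ ht => (cdf_lt_of_lt_of_isLeast hpos hk hys ht).le

end AccumulatedDemand

section CycleCost

variable {Ω : Type*} [MeasurableSpace Ω] {μ : Measure Ω} {ξ : ℕ → Ω → ℝ} {h p : ℝ}

lemma Lmp_sub_Lmp {an a : ℕ} (hana : an ≤ a) (n : ℕ) (w : ℝ) :
    Lmp μ h p ξ n a w - Lmp μ h p ξ n an w =
      ∑ k ∈ Finset.Ioc an a, newsvendorCost μ h p (acc ξ n k) w := by
  have hIcc (m : ℕ) : Finset.Icc 1 m = Finset.Ioc 0 m := Finset.Icc_add_one_left_eq_Ioc 0 m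
  rw [sub_eq_iff_eq_add', Lmp, Lmp, hIcc, hIcc]
  exact (Finset.sum_Ioc_consecutive _ (Nat.zero_le an) hana).symm

lemma Lmp_sub_Lmp_le_of_le_of_isLeast [IsProbabilityMeasure μ]
    (hint : ∀ i, Integrable (ξ i) μ) (hpos : ∀ i, ∀ᵐ ω ∂μ, 0 ≤ ξ i ω) (hh : 0 < h) (hp : 0 < p)
    {n an a : ℕ} (hana : an ≤ a) {ys z : ℝ}
    (hys : IsLeast {z : ℝ | an * p / (h + p) ≤ ∑ j ∈ Finset.Icc 1 an, cdf μ ξ n j z} ys)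
    (hz : z ≤ ys) :
    Lmp μ h p ξ n a ys - Lmp μ h p ξ n an ys ≤ Lmp μ h p ξ n a z - Lmp μ h p ξ n an z := by
  simp only [mul_div_assoc] at hys
  rw [Lmp_sub_Lmp hana, Lmp_sub_Lmp hana]
  refine Finset.sum_le_sum fun k hk => newsvendorCost_le_of_le (integrable_acc hint n k)
    hh.le hp.le hz ?_
  rw [← le_div_iff₀' (by positivity)]
  exact measureReal_acc_lt_le_of_isLeast hpos (Finset.mem_Ioc.1 hk).1.le hys

end CycleCost

theorem stmt9_general {Ω : Type*} [MeasurableSpace Ω] (μ : Measure Ω) [IsProbabilityMeasure μ]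
    (T : ℕ) (ξ : ℕ → Ω → ℝ)
    (hint : ∀ i, Integrable (ξ i) μ)
    (hpos : ∀ i, ∀ᵐ ω ∂μ, 0 ≤ ξ i ω)
    (h p K : ℝ) (hh : 0 < h) (hp : 0 < p) (hK : 0 ≤ K)
    (y : ℕ → ℕ → ℝ)
    (hyleast : ∀ n a, 1 ≤ n → 1 ≤ a → n + a - 1 ≤ T →
      IsLeast {z : ℝ | (a : ℝ) * p / (h + p) ≤ ∑ k ∈ Finset.Icc 1 a, cdf μ ξ n k z}
        (y n a))
    (hymin : ∀ n a, 1 ≤ n → 1 ≤ a → n + a - 1 ≤ T →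
      ∀ z, Lmp μ h p ξ n a (y n a) ≤ Lmp μ h p ξ n a z)
    (v : ℕ → ℝ)
    (hv : ∀ n, 1 ≤ n → n ≤ T →
      v n = sInf {x : ℝ | ∃ a, 1 ≤ a ∧ a ≤ T - n + 1 ∧
        x = (K + Lmp μ h p ξ n a (y n a)) + v (n + a)}) :
    ∀ n, 1 ≤ n → n ≤ T →
      ∀ an, 1 ≤ an → an ≤ T - n + 1 →
        v n = (K + Lmp μ h p ξ n an (y n an)) + v (n + an) →
        BddBelow {z : ℝ | Lmp μ h p ξ n an z + v (n + an) ≤ v n} →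
        ∀ a, an ≤ a → a ≤ T - n + 1 →
          {z : ℝ | Lmp μ h p ξ n a z + v (n + a) ≤ v n}.Nonempty →
          BddBelow {z : ℝ | Lmp μ h p ξ n a z + v (n + a) ≤ v n} →
          sInf {z : ℝ | Lmp μ h p ξ n an z + v (n + an) ≤ v n} ≤
            sInf {z : ℝ | Lmp μ h p ξ n a z + v (n + a) ≤ v n} := by
  intro n hn hnT an han hanT hvn hbdd a hana haT hne _
  have hys_mem : y n an ∈ {z : ℝ | Lmp μ h p ξ n an z + v (n + an) ≤ v n} := by
    change _ ≤ v n
    linarith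
  have hvn_le : v n ≤ (K + Lmp μ h p ξ n a (y n a)) + v (n + a) := by
    rw [hv n hn hnT]
    refine csInf_le (Finite.bddBelow ?_) ⟨a, han.trans hana, haT, rfl⟩
    refine ((finite_Icc 1 (T - n + 1)).image
      fun b => K + Lmp μ h p ξ n b (y n b) + v (n + b)).subset ?_
    rintro x ⟨b, hb1, hbT, rfl⟩
    exact ⟨b, ⟨hb1, hbT⟩, rfl⟩
  have hya_le := hymin n a hn (han.trans hana) (by omega) (y n an)
  refine le_csInf hne fun z hz => ?_
  rcases le_or_gt (y n an) z with hyz | hzy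
  · exact (csInf_le hbdd hys_mem).trans hyz
  · refine csInf_le hbdd ?_
    have htail := Lmp_sub_Lmp_le_of_le_of_isLeast hint hpos hh hp hana
      (hyleast n an hn han (by omega)) hzy.le
    change Lmp μ h p ξ n a z + v (n + a) ≤ v n at hz
    change _ ≤ v n
    linarith

/-- Lemma 2: for every cycle length `a ≥ a_n` for which
`ŝ_{n,a} = inf {y : L_{n,a}(y) + v_{n+a} ≤ v_n}` exists, one has `ŝ_{n,a_n} ≤ ŝ_{n,a}`;
hence the re-order level computation can be restricted to `1 ≤ a ≤ a_n`. -/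
theorem stmt9 {Ω : Type*} [MeasurableSpace Ω] (μ : Measure Ω) [IsProbabilityMeasure μ]
    (T : ℕ) (hT : 1 ≤ T) (ξ : ℕ → Ω → ℝ)
    (hmeas : ∀ i, Measurable (ξ i)) (hint : ∀ i, Integrable (ξ i) μ)
    (hpos : ∀ i, ∀ᵐ ω ∂μ, 0 ≤ ξ i ω)
    (hind : iIndepFun ξ μ)
    (h p K : ℝ) (hh : 0 < h) (hp : 0 < p) (hK : 0 ≤ K)
    (y : ℕ → ℕ → ℝ)
    (hyleast : ∀ n a, 1 ≤ n → 1 ≤ a → n + a - 1 ≤ T →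
      IsLeast {z : ℝ | (a : ℝ) * p / (h + p) ≤ ∑ k ∈ Finset.Icc 1 a, cdf μ ξ n k z}
        (y n a))
    (hymin : ∀ n a, 1 ≤ n → 1 ≤ a → n + a - 1 ≤ T →
      ∀ z, Lmp μ h p ξ n a (y n a) ≤ Lmp μ h p ξ n a z)
    (v : ℕ → ℝ) (hvT : v (T + 1) = 0)
    (hv : ∀ n, 1 ≤ n → n ≤ T →
      v n = sInf {x : ℝ | ∃ a, 1 ≤ a ∧ a ≤ T - n + 1 ∧
        x = (K + Lmp μ h p ξ n a (y n a)) + v (n + a)}) :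
    ∀ n, 1 ≤ n → n ≤ T →
      ∀ an, 1 ≤ an → an ≤ T - n + 1 →
        v n = (K + Lmp μ h p ξ n an (y n an)) + v (n + an) →
        BddBelow {z : ℝ | Lmp μ h p ξ n an z + v (n + an) ≤ v n} →
        ∀ a, an ≤ a → a ≤ T - n + 1 →
          {z : ℝ | Lmp μ h p ξ n a z + v (n + a) ≤ v n}.Nonempty →
          BddBelow {z : ℝ | Lmp μ h p ξ n a z + v (n + a) ≤ v n} →
          sInf {z : ℝ | Lmp μ h p ξ n an z + v (n + an) ≤ v n} ≤
            sInf {z : ℝ | Lmp μ h p ξ n a z + v (n + a) ≤ v n} :=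
  stmt9_general μ T ξ hint hpos h p K hh hp hK y hyleast hymin v hv
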